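/- arXiv:2206.03793 — 2 statements merged into one kernel-verified Lean document; each statement's English description precedes it below -/
import Mathlib

section
/- Every abstract polytope P of rank ≥ 0 can be uniquely factorised into polytopes prime with respect to the join: there exist r ≥ 1 and abstract polytopes Q₁, …, Q_r, each of rank ≥ 0 and prime with respect to the join, such that P is order-isomorphic to Q₁ * ⋯ * Q_r; and if P is also order-isomorphic to R₁ * ⋯ * R_s with each R_j of rank ≥ 0 and prime with respect to the join, then r = s and there is a permutation σ of {1,…,r} such that Q_i is order-isomorphic to R_{σ(i)} for every i. -/
universe u v

/-- An abstract polytope of rank `n ≥ -1`: a partial order with a least element (the `⊥` of the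
`OrderBot` instance) and a greatest element, in which every maximal chain has exactly `n + 2`
elements, every interval admitting a maximal chain of at least 4 elements is connected, and the
diamond condition holds. -/
structure IsAbstractPolytope (P : Type u) [PartialOrder P] [OrderBot P] (n : ℤ) : Prop where
  neg_one_le : -1 ≤ n
  exists_top : ∃ t : P, IsTop t
  maxChain_card : ∀ s : Set P, IsMaxChain (· ≤ ·) s → s.ncard = (n + 2).toNat
  connected : ∀ x z : P, x ≤ z →
      (∃ c : Set (Set.Icc x z), IsMaxChain (· ≤ ·) c ∧ 4 ≤ c.ncard) →
      ∀ F G : Set.Icc x z, (F : P) ≠ x → (F : P) ≠ z → (G : P) ≠ x → (G : P) ≠ z →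
        Relation.ReflTransGen
          (fun a b : Set.Icc x z =>
            ((a : P) ≠ x ∧ (a : P) ≠ z ∧ (b : P) ≠ x ∧ (b : P) ≠ z) ∧
              ((a : P) ≤ (b : P) ∨ (b : P) ≤ (a : P))) F G
  diamond : ∀ x z : P, x < z →
      (∀ c : Set (Set.Icc x z), IsMaxChain (· ≤ ·) c → c.ncard = 4) →
      {y : P | x < y ∧ y < z}.ncard = 2

/-- `x` has rank `k` if every maximal chain of the interval `[⊥, x] = Set.Iic x`
has exactly `k + 2` elements. -/
def HasRank {P : Type u} [PartialOrder P] [OrderBot P] (x : P) (k : ℤ) : Prop :=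
  ∀ c : Set (Set.Iic x), IsMaxChain (· ≤ ·) c → c.ncard = (k + 2).toNat

/-- The Cartesian product `P ×c Q` of two bounded posets: the subposet of `P × Q`
consisting of `(⊥, ⊥)` together with all pairs with both entries different from `⊥`.
(The join `P * Q` is just `P × Q` with the componentwise order.) -/
abbrev CartProd (P : Type u) (Q : Type v) [PartialOrder P] [OrderBot P]
    [PartialOrder Q] [OrderBot Q] : Type (max u v) :=
  {x : P × Q // x = (⊥, ⊥) ∨ (x.1 ≠ ⊥ ∧ x.2 ≠ ⊥)}

instance CartProd.instOrderBot (P : Type u) (Q : Type v) [PartialOrder P] [OrderBot P]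
    [PartialOrder Q] [OrderBot Q] : OrderBot (CartProd P Q) where
  bot := ⟨(⊥, ⊥), Or.inl rfl⟩
  bot_le x := show ((⊥, ⊥) : P × Q) ≤ x.val from bot_le

/-- The iterated Cartesian product of a family of bounded posets: tuples which are either
everywhere `⊥` or nowhere `⊥`. -/
abbrev CartPi {ι : Type v} (Q : ι → Type u) [∀ i, PartialOrder (Q i)] [∀ i, OrderBot (Q i)] :
    Type (max u v) :=
  {f : (i : ι) → Q i // (∀ i, f i = ⊥) ∨ (∀ i, f i ≠ ⊥)}

instance CartPi.instOrderBot {ι : Type v} (Q : ι → Type u) [∀ i, PartialOrder (Q i)]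
    [∀ i, OrderBot (Q i)] : OrderBot (CartPi Q) where
  bot := ⟨fun _ => ⊥, Or.inl fun _ => rfl⟩
  bot_le f := show (fun _ => ⊥) ≤ f.val from bot_le

/-- The `k`-fold Cartesian product of a bounded poset with itself. -/
abbrev CartPow (P : Type u) [PartialOrder P] [OrderBot P] (k : ℕ) : Type u :=
  CartPi (fun _ : Fin k => P)

/-- A bundled poset with a least element. -/
structure BddPoset : Type (u + 1) where
  carrier : Type u
  [po : PartialOrder carrier]
  [ob : OrderBot carrier]

attribute [instance] BddPoset.po BddPoset.ob

instance : CoeSort BddPoset.{u} (Type u) := ⟨BddPoset.carrier⟩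

/-- Prime with respect to the join: not order-isomorphic to a join `A * B = A × B` of two
abstract polytopes of rank at least `0`. -/
def JoinPrime (X : Type u) [PartialOrder X] [OrderBot X] : Prop :=
  ¬ ∃ (A B : BddPoset.{u}) (a b : ℤ), 0 ≤ a ∧ 0 ≤ b ∧
      IsAbstractPolytope A.carrier a ∧ IsAbstractPolytope B.carrier b ∧
      Nonempty (X ≃o (A.carrier × B.carrier))

/-- Prime with respect to the Cartesian product: not order-isomorphic to a Cartesian product
of two abstract polytopes of rank at least `1`. -/
def CartPrime (X : Type u) [PartialOrder X] [OrderBot X] : Prop :=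
  ¬ ∃ (A B : BddPoset.{u}) (a b : ℤ), 1 ≤ a ∧ 1 ≤ b ∧
      IsAbstractPolytope A.carrier a ∧ IsAbstractPolytope B.carrier b ∧
      Nonempty (X ≃o CartProd A.carrier B.carrier)

/-- `R` is a factor of `X` with respect to the join. -/
def JoinFactor (R : BddPoset.{u}) (X : Type u) [PartialOrder X] [OrderBot X] : Prop :=
  ∃ S : BddPoset.{u}, (∃ s : ℤ, IsAbstractPolytope S.carrier s) ∧
    Nonempty (X ≃o (R.carrier × S.carrier))

/-- `R` is a factor of `X` with respect to the Cartesian product. -/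
def CartFactor (R : BddPoset.{u}) (X : Type u) [PartialOrder X] [OrderBot X] : Prop :=
  ∃ S : BddPoset.{u}, (∃ s : ℤ, IsAbstractPolytope S.carrier s) ∧
    Nonempty (X ≃o CartProd R.carrier S.carrier)

/-- Relatively prime with respect to the join: no join-prime abstract polytope of rank `≥ 0` is a
join-factor of both. -/
def JoinRelPrime (X : Type u) [PartialOrder X] [OrderBot X]
    (Y : Type u) [PartialOrder Y] [OrderBot Y] : Prop :=
  ¬ ∃ R : BddPoset.{u}, (∃ r : ℤ, 0 ≤ r ∧ IsAbstractPolytope R.carrier r) ∧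
      JoinPrime R.carrier ∧ JoinFactor R X ∧ JoinFactor R Y

/-- Relatively prime with respect to the Cartesian product. -/
def CartRelPrime (X : Type u) [PartialOrder X] [OrderBot X]
    (Y : Type u) [PartialOrder Y] [OrderBot Y] : Prop :=
  ¬ ∃ R : BddPoset.{u}, (∃ r : ℤ, 1 ≤ r ∧ IsAbstractPolytope R.carrier r) ∧
      CartPrime R.carrier ∧ CartFactor R X ∧ CartFactor R Y

/-- A pyramid: order-isomorphic to `Q * pt` for some abstract polytope `Q`, where
`pt = Bool` is the two-element chain. -/
def IsPyramid (X : Type u) [PartialOrder X] [OrderBot X] : Prop :=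
  ∃ Q : BddPoset.{u}, (∃ q : ℤ, IsAbstractPolytope Q.carrier q) ∧
    Nonempty (X ≃o (Q.carrier × Bool))

/-- A prism: order-isomorphic to `Q ×c I` for some abstract polytope `Q`, where
`I = Bool × Bool` is the four-element rank-one polytope. -/
def IsPrism (X : Type u) [PartialOrder X] [OrderBot X] : Prop :=
  ∃ Q : BddPoset.{u}, (∃ q : ℤ, IsAbstractPolytope Q.carrier q) ∧
    Nonempty (X ≃o CartProd Q.carrier (Bool × Bool))

/-- The homomorphism from `Equiv.Perm ι` to automorphisms of `ι → G` permuting the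
coordinates: `σ` sends `v` to `v ∘ σ⁻¹`. -/
def permHom (ι : Type v) (G : Type u) [Group G] : Equiv.Perm ι →* MulAut (ι → G) where
  toFun σ :=
    { toFun := fun v => v ∘ σ.symm
      invFun := fun v => v ∘ σ
      left_inv := fun v => by funext i; simp
      right_inv := fun v => by funext i; simp
      map_mul' := fun v w => rfl }
  map_one' := by apply MulEquiv.ext; intro v; funext i; rfl
  map_mul' σ τ := by apply MulEquiv.ext; intro v; funext i; rfl

/-!
Existence is induction on the rank: a join `A * B` of polytopes of ranks `a` and `b` has rank
`a + b + 1`, so a polytope that is not prime splits into polytopes of smaller rank.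

For uniqueness fix a greatest element `t` of `P`. A factorisation `φ : P ≃o Π i, Q i` singles out
the elements `eᵢ` whose `i`-th coordinate is that of `t` and whose other coordinates are `⊥`; the
interval `[⊥, eᵢ]` is a copy of `Q i`. Read through a second factorisation `ψ : P ≃o Π j, R j`,
the interval `[⊥, eᵢ]` is the join of the intervals `[⊥, ψ eᵢ j]`. Join factors of a polytope are
polytopes (they are lower intervals) and `Q i` is prime, so only one of them is non-trivial:
`eᵢ ≤ f_j` for some `j`, where `f_j` is the analogous element for `ψ`. By symmetry
`f_j ≤ e_{i'}` for some `i'`; this forces `i' = i`, hence `eᵢ = f_j`, which matches `Q i` with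
`R j`.
-/

open Set Function

section Chains

variable {α β γ : Type*} [PartialOrder α] [PartialOrder β] [PartialOrder γ]

theorem IsMaxChain.mem_of_le_or_le {s : Set α} (hs : IsMaxChain (· ≤ ·) s) {a : α}
    (h : ∀ b ∈ s, a ≤ b ∨ b ≤ a) : a ∈ s :=
  hs.2 (hs.1.insert fun b hb _ => h b hb) (subset_insert a s) ▸ mem_insert a s

theorem IsMaxChain.mem_of_apply_mem {s : Set α} (hs : IsMaxChain (· ≤ ·) s) (f : α ↪o β)
    {t : Set β} (ht : IsChain (· ≤ ·) t) (hst : f '' s ⊆ t) {a : α} (ha : f a ∈ t) : a ∈ s :=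
  hs.mem_of_le_or_le fun b hb => by simpa using ht.total ha (hst (mem_image_of_mem f hb))

variable {f : α ↪o β} {g : γ ↪o β} {u : β} {c : Set α} {d : Set γ}

theorem IsMaxChain.mem_image_of_range_eq_Iic (hc : IsMaxChain (· ≤ ·) c)
    (hf : range f = Iic u) : u ∈ f '' c := by
  obtain ⟨a, rfl⟩ : u ∈ range f := hf ▸ self_mem_Iic
  refine mem_image_of_mem f (hc.mem_of_le_or_le fun b _ => Or.inr ?_)
  exact f.le_iff_le.1 (hf ▸ mem_range_self b : f b ∈ Iic (f a))

theorem IsMaxChain.mem_image_of_range_eq_Ici (hd : IsMaxChain (· ≤ ·) d)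
    (hg : range g = Ici u) : u ∈ g '' d := by
  obtain ⟨a, rfl⟩ : u ∈ range g := hg ▸ self_mem_Ici
  refine mem_image_of_mem g (hd.mem_of_le_or_le fun b _ => Or.inl ?_)
  exact g.le_iff_le.1 (hg ▸ mem_range_self b : g b ∈ Ici (g a))

theorem IsMaxChain.image_union_image (hc : IsMaxChain (· ≤ ·) c) (hd : IsMaxChain (· ≤ ·) d)
    (hf : range f = Iic u) (hg : range g = Ici u) : IsMaxChain (· ≤ ·) (f '' c ∪ g '' d) := by
  have hfg : ∀ a b, f a ≤ g b := fun a b =>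
    (hf ▸ mem_range_self a : f a ∈ Iic u).trans (hg ▸ mem_range_self b : g b ∈ Ici u)
  refine ⟨?_, fun t ht hsub => hsub.antisymm fun w hw => ?_⟩
  · rintro _ (⟨a, ha, rfl⟩ | ⟨b, hb, rfl⟩) _ (⟨a', ha', rfl⟩ | ⟨b', hb', rfl⟩) -
    · exact (hc.1.total ha ha').imp (fun h => f.monotone h) fun h => f.monotone h
    · exact Or.inl (hfg a b')
    · exact Or.inr (hfg a' b)
    · exact (hd.1.total hb hb').imp (fun h => g.monotone h) fun h => g.monotone h
  have hut : u ∈ t := hsub (Or.inl (hc.mem_image_of_range_eq_Iic hf))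
  rcases ht.total hw hut with hwu | huw
  · obtain ⟨a, rfl⟩ : w ∈ range f := hf ▸ hwu
    exact Or.inl (mem_image_of_mem f (hc.mem_of_apply_mem f ht (subset_union_left.trans hsub) hw))
  · obtain ⟨b, rfl⟩ : w ∈ range g := hg ▸ huw
    exact Or.inr (mem_image_of_mem g (hd.mem_of_apply_mem g ht (subset_union_right.trans hsub) hw))

end Chains

namespace OrderIso

def prodCongr {α β γ δ : Type*} [Preorder α] [Preorder β] [Preorder γ] [Preorder δ]
    (e₁ : α ≃o β) (e₂ : γ ≃o δ) : α × γ ≃o β × δ where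
  toEquiv := e₁.toEquiv.prodCongr e₂.toEquiv
  map_rel_iff' := by simp [Prod.le_def]

def sumPiEquivProdPi {ι ι' : Type*} (π : ι ⊕ ι' → Type*) [∀ i, LE (π i)] :
    (∀ i, π i) ≃o (∀ i, π (.inl i)) × (∀ i', π (.inr i')) where
  toEquiv := Equiv.sumPiEquivProdPi π
  map_rel_iff' := by simp [Pi.le_def, Prod.le_def, Sum.forall]

def piCongrLeft {ι ι' : Type*} (π : ι' → Type*) [∀ i, LE (π i)] (e : ι ≃ ι') :
    (∀ i, π (e i)) ≃o ∀ i', π i' where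
  toEquiv := Equiv.piCongrLeft π e
  map_rel_iff' := by
    intro x y
    simp only [Pi.le_def, e.forall_congr_right.symm]
    simp

def piSplitAt {ι : Type*} [DecidableEq ι] (i : ι) (π : ι → Type*) [∀ i, LE (π i)] :
    (∀ j, π j) ≃o π i × ∀ j : {j // j ≠ i}, π j where
  toEquiv := Equiv.piSplitAt i π
  map_rel_iff' := by
    intro x y
    simp only [Equiv.piSplitAt_apply, Prod.mk_le_mk, Pi.le_def, Subtype.forall]
    exact ⟨fun h j => if hj : j = i then hj ▸ h.1 else h.2 j hj, fun h => ⟨h i, fun j _ => h j⟩⟩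

end OrderIso

namespace OrderEmbedding

variable {α β : Type*} [PartialOrder α] [PartialOrder β]

noncomputable def orderIsoOfRangeEq (f : α ↪o β) {s : Set β} (h : range f = s) : α ≃o s :=
  f.orderIso.trans (OrderIso.setCongr _ _ h)

noncomputable def iccOrderIso (f : α ↪o β) (hf : (range f).OrdConnected) (x z : α) :
    Icc x z ≃o Icc (f x) (f z) :=
  OrderIso.ofSurjective
    (ofMapLEIff (fun a => ⟨f a, f.monotone a.2.1, f.monotone a.2.2⟩) fun _ _ => f.le_iff_le)
    fun b => by
      obtain ⟨a, ha, hab⟩ : (b : β) ∈ f '' Icc x z := by rw [f.image_Icc hf]; exact b.2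
      exact ⟨⟨a, ha⟩, Subtype.ext hab⟩

def sectL (α : Type*) {β : Type*} [PartialOrder α] [Preorder β] (b : β) : α ↪o α × β :=
  ofMapLEIff (fun a => (a, b)) fun _ _ => by simp

def sectR {α : Type*} [Preorder α] (a : α) (β : Type*) [PartialOrder β] : β ↪o α × β :=
  ofMapLEIff (fun b => (a, b)) fun _ _ => by simp

variable [OrderBot β] {a : α}

theorem range_sectL_bot (ha : IsTop a) : range (sectL α (⊥ : β)) = Iic (a, ⊥) := by
  ext ⟨x, y⟩
  simp [sectL, ha x, eq_comm]

theorem range_sectR (ha : IsTop a) : range (sectR a β) = Ici (a, ⊥) := by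
  ext ⟨x, y⟩
  simp [sectR, (ha x).ge_iff_eq, eq_comm]

end OrderEmbedding

theorem nontrivial_Iic_iff {P : Type*} [PartialOrder P] [OrderBot P] {y : P} :
    Nontrivial (Iic y) ↔ y ≠ ⊥ := by
  refine ⟨fun ⟨a, b, hab⟩ hy => hab ?_, fun hy => ⟨⟨⊥, bot_le⟩, ⟨y, le_rfl⟩, ?_⟩⟩
  · subst hy
    exact Subtype.ext ((le_bot_iff.1 a.2).trans (le_bot_iff.1 b.2).symm)
  · exact fun h => hy (congrArg Subtype.val h).symm

namespace IsAbstractPolytope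

variable {A B : Type*} [PartialOrder A] [OrderBot A] [PartialOrder B] [OrderBot B] {n : ℤ}

theorem finite_of_isMaxChain (hB : IsAbstractPolytope B n) {c : Set B}
    (hc : IsMaxChain (· ≤ ·) c) : c.Finite :=
  finite_of_ncard_ne_zero (by rw [hB.maxChain_card c hc]; have := hB.neg_one_le; omega)

theorem ncard_add_ncard_of_isMaxChain {α γ : Type*} [PartialOrder α] [PartialOrder γ]
    (hB : IsAbstractPolytope B n) {f : α ↪o B} {g : γ ↪o B} {u : B} {c : Set α} {d : Set γ}
    (hc : IsMaxChain (· ≤ ·) c) (hd : IsMaxChain (· ≤ ·) d)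
    (hf : range f = Iic u) (hg : range g = Ici u) : c.ncard + d.ncard = (n + 2).toNat + 1 := by
  have hcd := hc.image_union_image hd hf hg
  have hfin := hB.finite_of_isMaxChain hcd
  have hinter : f '' c ∩ g '' d = {u} := by
    refine Subset.antisymm (fun w ⟨⟨a, _, ha⟩, ⟨b, _, hb⟩⟩ => le_antisymm ?_ ?_)
      (singleton_subset_iff.2 ⟨hc.mem_image_of_range_eq_Iic hf, hd.mem_image_of_range_eq_Ici hg⟩)
    · exact ha ▸ (hf ▸ mem_range_self a : f a ∈ Iic u)
    · exact hb ▸ (hg ▸ mem_range_self b : g b ∈ Ici u)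
  have := ncard_union_add_ncard_inter _ _ (hfin.subset subset_union_left)
    (hfin.subset subset_union_right)
  rwa [hB.maxChain_card _ hcd, hinter, ncard_singleton, ncard_image_of_injective _ f.injective,
    ncard_image_of_injective _ g.injective, eq_comm] at this

/-- The connectedness and diamond conditions pass to any poset embedding with convex range, since
its intervals are intervals of the target. -/
theorem of_orderEmbedding (hB : IsAbstractPolytope B n) (f : A ↪o B)
    (hf : (range f).OrdConnected) {m : ℤ} (hm : -1 ≤ m) (htop : ∃ t : A, IsTop t)
    (hcard : ∀ c : Set A, IsMaxChain (· ≤ ·) c → c.ncard = (m + 2).toNat) :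
    IsAbstractPolytope A m where
  neg_one_le := hm
  exists_top := htop
  maxChain_card := hcard
  connected x z hxz hchain F G hFx hFz hGx hGz := by
    let h := f.iccOrderIso hf x z
    obtain ⟨c, hc, hc4⟩ := hchain
    have hpath := hB.connected (f x) (f z) (f.monotone hxz)
      ⟨h '' c, hc.image h, by rwa [ncard_image_of_injective _ h.injective]⟩ (h F) (h G)
      (f.injective.ne hFx) (f.injective.ne hFz) (f.injective.ne hGx) (f.injective.ne hGz)
    have hne : ∀ (b : Icc (f x) (f z)) (y : A), (b : B) ≠ f y → (h.symm b : A) ≠ y :=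
      fun b y hb hy => hb (by rw [← h.apply_symm_apply b, ← hy]; rfl)
    rw [← h.symm_apply_apply F, ← h.symm_apply_apply G]
    refine Relation.ReflTransGen.lift h.symm (fun a b ⟨⟨hax, haz, hbx, hbz⟩, hab⟩ => ?_) _ _ hpath
    exact ⟨⟨hne a x hax, hne a z haz, hne b x hbx, hne b z hbz⟩,
      hab.imp (fun hab => h.symm.monotone hab) fun hba => h.symm.monotone hba⟩
  diamond x z hxz hall := by
    let h := f.iccOrderIso hf x z
    have hall' : ∀ c : Set (Icc (f x) (f z)), IsMaxChain (· ≤ ·) c → c.ncard = 4 := fun c hc => by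
      rw [← hall _ (hc.image h.symm), ncard_image_of_injective _ h.symm.injective]
    have := hB.diamond (f x) (f z) (f.strictMono hxz) hall'
    change (Ioo (f x) (f z)).ncard = 2 at this
    rwa [← f.image_Ioo hf, ncard_image_of_injective _ f.injective] at this

theorem of_orderIso (hB : IsAbstractPolytope B n) (e : A ≃o B) : IsAbstractPolytope A n := by
  obtain ⟨t, ht⟩ := hB.exists_top
  refine hB.of_orderEmbedding e.toOrderEmbedding (by simpa using ordConnected_univ)
    hB.neg_one_le ⟨e.symm t, fun a => e.le_symm_apply.2 (ht _)⟩ fun c hc => ?_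
  rw [← hB.maxChain_card _ (hc.image e), ncard_image_of_injective _ e.injective]

theorem exists_rank_of_orderEmbedding (hB : IsAbstractPolytope B n) (f : A ↪o B) {u : B}
    (hf : range f = Iic u) : ∃ m, IsAbstractPolytope A m := by
  obtain ⟨t, rfl⟩ : u ∈ range f := hf ▸ self_mem_Iic
  have ht : IsTop t := fun a => f.le_iff_le.1 (hf ▸ mem_range_self a : f a ∈ Iic (f t))
  let g := OrderEmbedding.subtype (· ∈ Ici (f t))
  have hg : range g = Ici (f t) := by simp [g]; rfl
  have hd : IsMaxChain (· ≤ ·) (maxChain (· ≤ ·) : Set (Ici (f t))) := maxChain_spec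
  have hc : IsMaxChain (· ≤ ·) (maxChain (· ≤ ·) : Set A) := maxChain_spec
  have hcfin : (maxChain (· ≤ ·) : Set A).Finite :=
    ((hB.finite_of_isMaxChain (hc.image_union_image hd hf hg)).subset
      subset_union_left).of_finite_image f.injective.injOn
  have hcpos := (ncard_pos hcfin).2 ⟨t, hc.mem_of_le_or_le fun b _ => Or.inr (ht b)⟩
  have hcd := hB.ncard_add_ncard_of_isMaxChain hc hd hf hg
  refine ⟨((maxChain (· ≤ ·) : Set A).ncard : ℤ) - 2, hB.of_orderEmbedding f
    (hf ▸ ordConnected_Iic) (by omega) ⟨t, ht⟩ fun c hc' => ?_⟩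
  have := hB.ncard_add_ncard_of_isMaxChain hc' hd hf hg
  omega

theorem exists_rank_fst (h : IsAbstractPolytope (A × B) n) : ∃ a, IsAbstractPolytope A a := by
  obtain ⟨t, ht⟩ := h.exists_top
  exact h.exists_rank_of_orderEmbedding _ (OrderEmbedding.range_sectL_bot fun a => (ht (a, t.2)).1)

theorem exists_rank_snd (h : IsAbstractPolytope (A × B) n) : ∃ b, IsAbstractPolytope B b :=
  (h.of_orderIso OrderIso.prodComm).exists_rank_fst

theorem rank_prod {a b : ℤ} (h : IsAbstractPolytope (A × B) n) (hA : IsAbstractPolytope A a)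
    (hB : IsAbstractPolytope B b) : n = a + b + 1 := by
  obtain ⟨t, ht⟩ := hA.exists_top
  have hcA : IsMaxChain (· ≤ ·) (maxChain (· ≤ ·) : Set A) := maxChain_spec
  have hcB : IsMaxChain (· ≤ ·) (maxChain (· ≤ ·) : Set B) := maxChain_spec
  have := h.ncard_add_ncard_of_isMaxChain hcA hcB (OrderEmbedding.range_sectL_bot ht)
    (OrderEmbedding.range_sectR ht)
  rw [hA.maxChain_card _ hcA, hB.maxChain_card _ hcB] at this
  have := hA.neg_one_le
  have := hB.neg_one_le
  omega

theorem nonneg_iff_nontrivial (hB : IsAbstractPolytope B n) : 0 ≤ n ↔ Nontrivial B := by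
  have hc : IsMaxChain (· ≤ ·) (maxChain (· ≤ ·) : Set B) := maxChain_spec
  refine ⟨fun hn => ?_, fun _ => ?_⟩
  · have : 1 < (maxChain (· ≤ ·) : Set B).ncard := by rw [hB.maxChain_card _ hc]; omega
    obtain ⟨⟨a, -, b, -, hab⟩, -⟩ := one_lt_ncard_iff_nontrivial_and_finite.1 this
    exact nontrivial_of_ne a b hab
  · obtain ⟨x, hx⟩ := exists_ne (⊥ : B)
    obtain ⟨M, hM, hsub⟩ := (IsChain.pair (r := (· ≤ ·)) (bot_le (a := x))).exists_maxChain
    have := ncard_le_ncard hsub (hB.finite_of_isMaxChain hM)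
    rw [ncard_pair hx.symm, hB.maxChain_card M hM] at this
    omega

end IsAbstractPolytope

def IsJoinPrimePolytope (X : Type u) [PartialOrder X] [OrderBot X] : Prop :=
  ∃ k : ℤ, 0 ≤ k ∧ IsAbstractPolytope X k ∧ JoinPrime X

theorem IsJoinPrimePolytope.nontrivial {X : Type u} [PartialOrder X] [OrderBot X]
    (hX : IsJoinPrimePolytope X) : Nontrivial X :=
  let ⟨_, hk, hXk, _⟩ := hX
  hXk.nonneg_iff_nontrivial.1 hk

theorem IsJoinPrimePolytope.existsUnique_nontrivial {X : Type u} [PartialOrder X] [OrderBot X]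
    (hX : IsJoinPrimePolytope X) {ι : Type} [DecidableEq ι] {S : ι → Type u}
    [∀ j, PartialOrder (S j)] [∀ j, OrderBot (S j)] (e : X ≃o ∀ j, S j) :
    ∃! j, Nontrivial (S j) := by
  have := hX.nontrivial
  obtain ⟨k, -, hXk, hprime⟩ := hX
  obtain ⟨j, hj⟩ : ∃ j, Nontrivial (S j) := by
    by_contra! h
    exact not_subsingleton X e.toEquiv.subsingleton
  refine ⟨j, hj, fun j' hj' => by_contra fun hne => hprime ?_⟩
  have : Nontrivial (∀ i : {i // i ≠ j}, S i) :=
    @Pi.nontrivial_at _ _ ⟨j', hne⟩ (fun _ => ⟨⊥⟩) hj'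
  let e' := e.trans (OrderIso.piSplitAt j S)
  have hprod := hXk.of_orderIso e'.symm
  obtain ⟨a, ha⟩ := hprod.exists_rank_fst
  obtain ⟨b, hb⟩ := hprod.exists_rank_snd
  exact ⟨⟨S j⟩, ⟨∀ i : {i // i ≠ j}, S i⟩, a, b, ha.nonneg_iff_nontrivial.2 hj,
    hb.nonneg_iff_nontrivial.2 this, ha, hb, ⟨e'⟩⟩

theorem exists_joinPrime_factorisation {P : Type u} [PartialOrder P] [OrderBot P] {n : ℤ}
    (hn : 0 ≤ n) (hP : IsAbstractPolytope P n) :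
    ∃ (r : ℕ) (Q : Fin r → BddPoset.{u}), 1 ≤ r ∧ (∀ i, IsJoinPrimePolytope (Q i).carrier) ∧
      Nonempty (P ≃o ((i : Fin r) → (Q i).carrier)) := by
  lift n to ℕ using hn
  induction n using Nat.strong_induction_on generalizing P with
  | _ n ih =>
  by_cases hprime : JoinPrime P
  · exact ⟨1, fun _ => ⟨P⟩, le_rfl, fun _ => ⟨n, n.cast_nonneg, hP, hprime⟩,
      ⟨(OrderIso.funUnique (Fin 1) P).symm⟩⟩
  obtain ⟨A, B, a, b, ha, hb, hA, hB, ⟨e⟩⟩ := not_not.1 hprime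
  have hab := (hP.of_orderIso e.symm).rank_prod hA hB
  lift a to ℕ using ha
  lift b to ℕ using hb
  obtain ⟨ra, QA, hra, hQA, ⟨eA⟩⟩ := ih a (by omega) hA
  obtain ⟨rb, QB, -, hQB, ⟨eB⟩⟩ := ih b (by omega) hB
  let π := fun x => (Sum.elim QA QB x).carrier
  exact ⟨ra + rb, fun k => Sum.elim QA QB (finSumFinEquiv.symm k), by omega,
    fun k => (Sum.forall (p := fun x => IsJoinPrimePolytope (Sum.elim QA QB x).carrier)).2
      ⟨hQA, hQB⟩ _,
    ⟨e.trans ((eA.prodCongr eB).trans ((OrderIso.sumPiEquivProdPi π).symm.trans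
      (OrderIso.piCongrLeft π finSumFinEquiv.symm).symm))⟩⟩

namespace OrderIso

variable {P : Type*} [PartialOrder P] {ι : Type*} [DecidableEq ι] {T : ι → Type*}
  [∀ i, PartialOrder (T i)] [∀ i, OrderBot (T i)] (ψ : P ≃o ∀ i, T i) {t : P}

def factorEmbedding (i : ι) : T i ↪o P :=
  (OrderEmbedding.ofMapLEIff (update ⊥ i) fun _ _ => by simp).trans ψ.symm.toOrderEmbedding

def factorTop (t : P) (i : ι) : P :=
  ψ.factorEmbedding i (ψ t i)

theorem le_factorTop_iff (ht : IsTop t) {i : ι} {x : P} :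
    x ≤ ψ.factorTop t i ↔ ∀ j ≠ i, ψ x j = ⊥ := by
  simp [factorTop, factorEmbedding, ← ψ.le_iff_le, le_update_iff, ψ.monotone (ht x) i]

theorem range_factorEmbedding (ht : IsTop t) (i : ι) :
    range (ψ.factorEmbedding i) = Iic (ψ.factorTop t i) := by
  ext x
  rw [mem_Iic, ψ.le_factorTop_iff ht]
  refine ⟨?_, fun hx => ⟨ψ x i, ψ.symm_apply_eq.2 ?_⟩⟩
  · rintro ⟨a, rfl⟩ j hj
    simp [factorEmbedding, hj]
  · exact update_eq_iff.2 ⟨rfl, fun j hj => (hx j hj).symm⟩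

noncomputable def factorIsoIic (ht : IsTop t) (i : ι) : T i ≃o Iic (ψ.factorTop t i) :=
  (ψ.factorEmbedding i).orderIsoOfRangeEq (ψ.range_factorEmbedding ht i)

theorem eq_of_factorTop_le_factorTop (ht : IsTop t) {i i' : ι} [Nontrivial (T i)]
    (h : ψ.factorTop t i ≤ ψ.factorTop t i') : i = i' := by
  by_contra hne
  obtain ⟨a, ha⟩ := exists_ne (⊥ : T i)
  have hti : ψ t i = ⊥ := by
    simpa [factorTop, factorEmbedding] using (ψ.le_factorTop_iff ht).1 h i hne
  have : a ≤ ψ t i := by simpa using ψ.monotone (ht (ψ.symm (update (ψ t) i a))) i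
  exact ha (le_bot_iff.1 (hti ▸ this))

noncomputable def iicPi (x : P) : Iic x ≃o ∀ i, Iic (ψ x i) :=
  (OrderEmbedding.orderIsoOfRangeEq
    ((OrderEmbedding.ofMapLEIff (fun y : ∀ i, Iic (ψ x i) => fun i => (y i : T i))
      fun _ _ => Iff.rfl).trans ψ.symm.toOrderEmbedding) (by
        ext y
        refine ⟨?_, fun hy => ⟨fun i => ⟨ψ y i, ψ.monotone hy i⟩, ψ.symm_apply_apply y⟩⟩
        rintro ⟨y', rfl⟩
        exact ψ.symm_apply_le.2 fun i => (y' i).2)).symm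

end OrderIso

section Uniqueness

variable {P : Type*} [PartialOrder P] {t : P} {ι κ : Type} [DecidableEq ι]
  [DecidableEq κ] {Q : ι → Type u} {R : κ → Type u} [∀ i, PartialOrder (Q i)]
  [∀ i, OrderBot (Q i)] [∀ j, PartialOrder (R j)] [∀ j, OrderBot (R j)]

theorem OrderIso.exists_factorTop_le_factorTop (φ : P ≃o ∀ i, Q i) (ψ : P ≃o ∀ j, R j)
    (ht : IsTop t) {i : ι} (hQ : IsJoinPrimePolytope (Q i)) :
    ∃ j, φ.factorTop t i ≤ ψ.factorTop t j := by
  obtain ⟨j, -, hj⟩ := hQ.existsUnique_nontrivial ((φ.factorIsoIic ht i).trans (ψ.iicPi _))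
  refine ⟨j, (ψ.le_factorTop_iff ht).2 fun j' hj' => ?_⟩
  by_contra hne
  exact hj' (hj j' (nontrivial_Iic_iff.2 hne))

theorem joinPrime_factorisation_unique (ht : IsTop t) (hQ : ∀ i, IsJoinPrimePolytope (Q i))
    (hR : ∀ j, IsJoinPrimePolytope (R j)) (φ : P ≃o ∀ i, Q i) (ψ : P ≃o ∀ j, R j) :
    ∃ σ : ι ≃ κ, ∀ i, Nonempty (Q i ≃o R (σ i)) := by
  have := fun i => (hQ i).nontrivial
  have := fun j => (hR j).nontrivial
  choose σ hσ using fun i => φ.exists_factorTop_le_factorTop ψ ht (hQ i)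
  choose τ hτ using fun j => ψ.exists_factorTop_le_factorTop φ ht (hR j)
  have hτσ : ∀ i, τ (σ i) = i := fun i =>
    (φ.eq_of_factorTop_le_factorTop ht ((hσ i).trans (hτ (σ i)))).symm
  have hστ : ∀ j, σ (τ j) = j := fun j =>
    (ψ.eq_of_factorTop_le_factorTop ht ((hτ j).trans (hσ (τ j)))).symm
  have heq : ∀ i, φ.factorTop t i = ψ.factorTop t (σ i) := fun i =>
    (hσ i).antisymm ((hτ (σ i)).trans_eq (congrArg _ (hτσ i)))
  exact ⟨⟨σ, τ, hτσ, hστ⟩, fun i => ⟨(φ.factorIsoIic ht i).trans ((OrderIso.setCongr _ _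
    (congrArg Iic (heq i))).trans (ψ.factorIsoIic ht (σ i)).symm)⟩⟩

end Uniqueness

/-- Every abstract polytope of rank `≥ 0` has a factorisation, unique up to
permutation and order-isomorphism of the factors, into polytopes of rank `≥ 0` that are prime
with respect to the join (an `r`-fold join being a dependent product with componentwise order). -/
theorem unique_join_factorisation (P : Type u) [PartialOrder P] [OrderBot P] (n : ℤ)
    (hn : 0 ≤ n) (hP : IsAbstractPolytope P n) :
    ∃ (r : ℕ) (Q : Fin r → BddPoset.{u}), 1 ≤ r ∧
      (∀ i, ∃ k : ℤ, 0 ≤ k ∧ IsAbstractPolytope (Q i).carrier k ∧ JoinPrime (Q i).carrier) ∧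
      Nonempty (P ≃o ((i : Fin r) → (Q i).carrier)) ∧
      ∀ (s : ℕ) (R : Fin s → BddPoset.{u}), 1 ≤ s →
        (∀ j, ∃ k : ℤ, 0 ≤ k ∧ IsAbstractPolytope (R j).carrier k ∧ JoinPrime (R j).carrier) →
        Nonempty (P ≃o ((j : Fin s) → (R j).carrier)) →
        r = s ∧ ∃ σ : Fin r ≃ Fin s, ∀ i, Nonempty ((Q i).carrier ≃o (R (σ i)).carrier) := by
  obtain ⟨r, Q, hr, hQ, ⟨φ⟩⟩ := exists_joinPrime_factorisation hn hP
  refine ⟨r, Q, hr, hQ, ⟨φ⟩, fun s R _ hR ⟨ψ⟩ => ?_⟩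
  obtain ⟨t, ht⟩ := hP.exists_top
  obtain ⟨σ, hσ⟩ := joinPrime_factorisation_unique ht hQ hR φ ψ
  exact ⟨Fin.equiv_iff_eq.1 ⟨σ⟩, σ, hσ⟩
end

section
/- For every k ≥ 1, the group of order-automorphisms of the face poset of the k-cube is isomorphic to the semidirect product (Fin k → ZMod 2) ⋊ Equiv.Perm (Fin k), where a permutation σ of Fin k acts on v : Fin k → ZMod 2 by v ↦ v ∘ σ⁻¹ (the hyperoctahedral group (ℤ/2ℤ)^k ⋊ Sym(k)). -/
universe u v

/-- The face poset of the `k`-cube: subsets of `Fin k → Bool` that are empty or subcubes,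
ordered by inclusion. -/
def CubeFaces (k : ℕ) : Set (Set (Fin k → Bool)) :=
  {A | A = ∅ ∨ ∃ (S : Set (Fin k)) (f : Fin k → Bool),
    A = {g : Fin k → Bool | ∀ i ∉ S, g i = f i}}

/-!
The hyperoctahedral group acts on the vertices `Fin k → Bool` of the cube by permuting the
coordinates and flipping some of them, and this action maps subcubes to subcubes; it is faithful
on vertices, hence on faces.

Conversely, the atoms of the face poset are the vertices and every face is the set of atoms below
it, so an automorphism is the image map of a vertex permutation `ρ`. The coatoms are the facets
`{g | g i = b}`, so `ρ` permutes the facets. Being a bijection, it sends the pair of disjoint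
facets in direction `i` to the pair of disjoint facets in some direction `σ i`, which forces
`ρ g (σ i) = g i xor c i`.
-/

section SetFamily

variable {α : Type*} {F : Set (Set α)}

theorem isAtom_iff_exists_eq_singleton [OrderBot F] (hempty : ∅ ∈ F)
    (hsingleton : ∀ x, {x} ∈ F) {A : F} : IsAtom A ↔ ∃ x, (A : Set α) = {x} := by
  have hbot : ((⊥ : F) : Set α) = ∅ := Set.subset_empty_iff.1 (bot_le (a := (⟨∅, hempty⟩ : F)))
  constructor
  · intro hA
    obtain ⟨x, hx⟩ : (A : Set α).Nonempty :=
      Set.nonempty_iff_ne_empty.2 fun h => hA.1 (Subtype.ext (h.trans hbot.symm))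
    refine ⟨x, ?_⟩
    rcases hA.le_iff.1 (show (⟨{x}, hsingleton x⟩ : F) ≤ A from Set.singleton_subset_iff.2 hx)
      with h | h
    · exact absurd (congrArg Subtype.val h) (by simp [hbot])
    · exact (congrArg Subtype.val h).symm
  · rintro ⟨x, hx⟩
    refine ⟨fun h => Set.singleton_ne_empty x (hx ▸ hbot ▸ congrArg Subtype.val h), fun B hB => ?_⟩
    rcases Set.subset_singleton_iff_eq.1 (hx ▸ hB.le : (B : Set α) ⊆ {x}) with h | h
    · exact Subtype.ext (h.trans hbot.symm)
    · exact absurd (Subtype.ext (h.trans hx.symm)) hB.ne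

theorem OrderIso.exists_perm_image_eq (hempty : ∅ ∈ F) (hsingleton : ∀ x, {x} ∈ F)
    (φ : F ≃o F) : ∃ ρ : Equiv.Perm α, ∀ A : F, (φ A : Set α) = ρ '' A := by
  let _ : OrderBot F := Subtype.orderBot hempty
  have hatom (ψ : F ≃o F) (x : α) : ∃ y, (ψ ⟨{x}, hsingleton x⟩ : Set α) = {y} :=
    (isAtom_iff_exists_eq_singleton hempty hsingleton).1 <| (ψ.isAtom_iff _).2 <|
      (isAtom_iff_exists_eq_singleton hempty hsingleton).2 ⟨x, rfl⟩
  choose f hf using hatom φ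
  choose g hg using hatom φ.symm
  have hinv (ψ : F ≃o F) (u v : α → α) (hu : ∀ x, (ψ ⟨{x}, hsingleton x⟩ : Set α) = {u x})
      (hv : ∀ x, (ψ.symm ⟨{x}, hsingleton x⟩ : Set α) = {v x}) (x : α) : v (u x) = x := by
    have := hv (u x)
    rwa [show (⟨{u x}, hsingleton (u x)⟩ : F) = ψ ⟨{x}, hsingleton x⟩ from Subtype.ext (hu x).symm,
      ψ.symm_apply_apply, eq_comm, Set.singleton_eq_singleton_iff] at this
  refine ⟨⟨f, g, hinv φ f g hf hg, hinv φ.symm g f hg hf⟩, fun A => Set.ext fun y => ?_⟩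
  calc y ∈ (φ A : Set α) ↔ (⟨{y}, hsingleton y⟩ : F) ≤ φ A := Set.singleton_subset_iff.symm
    _ ↔ φ.symm ⟨{y}, hsingleton y⟩ ≤ A := φ.symm_apply_le.symm
    _ ↔ g y ∈ (A : Set α) := by rw [← Subtype.coe_le_coe, hg]; exact Set.singleton_subset_iff
    _ ↔ y ∈ _ := by rw [Set.mem_image_equiv]; rfl

def Equiv.Perm.imageOrderIso (ρ : Equiv.Perm α) (hρ : ∀ A, ρ '' A ∈ F ↔ A ∈ F) : F ≃o F where
  toFun A := ⟨ρ '' A, (hρ A).2 A.2⟩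
  invFun A := ⟨ρ.symm '' A, (hρ _).1 (by rw [ρ.image_symm_image]; exact A.2)⟩
  left_inv A := Subtype.ext (ρ.symm_image_image A)
  right_inv A := Subtype.ext (ρ.image_symm_image A)
  map_rel_iff' := Set.image_subset_image_iff ρ.injective

theorem Equiv.Perm.coe_imageOrderIso_apply (ρ : Equiv.Perm α) (hρ : ∀ A, ρ '' A ∈ F ↔ A ∈ F)
    (A : F) : (ρ.imageOrderIso hρ A : Set α) = ρ '' A := rfl

end SetFamily

def bitEquiv : Multiplicative (ZMod 2) ≃ Bool where
  toFun x := decide (x.toAdd = 1)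
  invFun b := Multiplicative.ofAdd (cond b 1 0)
  left_inv := by decide
  right_inv := by decide

theorem bitEquiv_mul (x y : Multiplicative (ZMod 2)) :
    bitEquiv (x * y) = xor (bitEquiv x) (bitEquiv y) := by
  revert x y; decide

abbrev Hyperoctahedral (k : ℕ) : Type :=
  (Fin k → Multiplicative (ZMod 2)) ⋊[permHom (Fin k) (Multiplicative (ZMod 2))] Equiv.Perm (Fin k)

def hyperoctahedralPerm (k : ℕ) : Hyperoctahedral k →* Equiv.Perm (Fin k → Bool) where
  toFun x :=
    { toFun g j := xor (g (x.right.symm j)) (bitEquiv (x.left j))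
      invFun g i := xor (g (x.right i)) (bitEquiv (x.left (x.right i)))
      left_inv g := by funext i; simp
      right_inv g := by funext j; simp }
  map_one' := by ext g j; exact Bool.xor_false _
  map_mul' x y := by
    ext g j
    change xor _ (bitEquiv (x.left j * y.left (x.right.symm j))) = xor (xor _ _) _
    rw [bitEquiv_mul, Bool.xor_assoc, Bool.xor_comm (bitEquiv (x.left j))]
    rfl

theorem hyperoctahedralPerm_apply {k : ℕ} (x : Hyperoctahedral k) (g : Fin k → Bool) (j : Fin k) :
    hyperoctahedralPerm k x g j = xor (g (x.right.symm j)) (bitEquiv (x.left j)) := rfl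

theorem hyperoctahedralPerm_symm_apply {k : ℕ} (x : Hyperoctahedral k) (g : Fin k → Bool)
    (i : Fin k) :
    (hyperoctahedralPerm k x).symm g i = xor (g (x.right i)) (bitEquiv (x.left (x.right i))) := rfl

theorem hyperoctahedralPerm_injective (k : ℕ) : Function.Injective (hyperoctahedralPerm k) := by
  refine (injective_iff_map_eq_one _).2 fun x hx => ?_
  have hfix (g : Fin k → Bool) (j : Fin k) : xor (g (x.right.symm j)) (bitEquiv (x.left j)) = g j :=
    congrFun (Equiv.congr_fun hx g) j
  have hleft (j : Fin k) : bitEquiv (x.left j) = false := by simpa using hfix (fun _ => false) j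
  have hright (j : Fin k) : x.right.symm j = j := by simpa [hleft] using hfix (· = j) j
  exact SemidirectProduct.ext (funext fun j => bitEquiv.injective (hleft j))
    (Equiv.ext fun j => ((x.right.symm_apply_eq).1 (hright j)).symm)

namespace CubeFaces

variable {k : ℕ}

def subcube (S : Set (Fin k)) (f : Fin k → Bool) : Set (Fin k → Bool) := {g | ∀ i ∉ S, g i = f i}

theorem empty_mem : ∅ ∈ CubeFaces k := Or.inl rfl

theorem subcube_mem (S : Set (Fin k)) (f : Fin k → Bool) : subcube S f ∈ CubeFaces k :=
  Or.inr ⟨S, f, rfl⟩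

theorem univ_mem : Set.univ ∈ CubeFaces k := by
  convert subcube_mem Set.univ (fun _ => false)
  simp [subcube]

theorem singleton_mem (g : Fin k → Bool) : {g} ∈ CubeFaces k := by
  convert subcube_mem ∅ g
  ext h
  simp [subcube, funext_iff]

instance : BoundedOrder (CubeFaces k) := Subtype.boundedOrder empty_mem univ_mem

theorem image_subcube (x : Hyperoctahedral k) (S : Set (Fin k)) (f : Fin k → Bool) :
    hyperoctahedralPerm k x '' subcube S f =
      subcube (x.right '' S) (hyperoctahedralPerm k x f) := by
  ext h
  simp only [Set.mem_image_equiv, subcube, Set.mem_ofPred_eq]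
  conv_rhs => rw [← x.right.forall_congr_right]
  refine forall_congr' fun i => ?_
  simp only [hyperoctahedralPerm_symm_apply, hyperoctahedralPerm_apply, Equiv.symm_apply_apply]
  cases bitEquiv (x.left (x.right i)) <;> simp

theorem hyperoctahedralPerm_image_mem_iff (x : Hyperoctahedral k) {A : Set (Fin k → Bool)} :
    hyperoctahedralPerm k x '' A ∈ CubeFaces k ↔ A ∈ CubeFaces k := by
  have key (x : Hyperoctahedral k) {A : Set (Fin k → Bool)} (hA : A ∈ CubeFaces k) :
      hyperoctahedralPerm k x '' A ∈ CubeFaces k := by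
    obtain rfl | ⟨S, f, rfl⟩ : A = ∅ ∨ ∃ S f, A = subcube S f := hA
    · rw [Set.image_empty]; exact empty_mem
    · rw [image_subcube]; exact subcube_mem _ _
  refine ⟨fun h => ?_, key x⟩
  simpa [map_inv, Equiv.Perm.inv_def] using key x⁻¹ h

def facet (i : Fin k) (b : Bool) : Set (Fin k → Bool) := {g | g i = b}

theorem facet_mem (i : Fin k) (b : Bool) : facet i b ∈ CubeFaces k := by
  convert subcube_mem {i}ᶜ (fun _ => b)
  ext g
  simp [facet, subcube]

theorem const_mem_facet (i : Fin k) (b : Bool) : (fun _ => b) ∈ facet i b := rfl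

theorem facet_ne_univ (i : Fin k) (b : Bool) : facet i b ≠ Set.univ :=
  fun h => by simpa [facet] using (h ▸ Set.mem_univ _ : (fun _ => !b) ∈ facet i b)

theorem facet_subset_facet {i j : Fin k} {b c : Bool} (h : facet i b ⊆ facet j c) :
    i = j ∧ b = c := by
  have hg : Function.update (fun _ => !c) i b j = c := h (by simp [facet])
  by_cases hij : j = i
  · subst hij; simpa using hg
  · simp [hij] at hg

theorem eq_of_disjoint_facet {i j : Fin k} {b c : Bool} (h : Disjoint (facet i b) (facet j c)) :
    i = j ∧ c = !b := by
  have hg : Function.update (fun _ => c) i b j ≠ c :=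
    Set.disjoint_left.1 h (by simp [facet])
  by_cases hij : j = i
  · subst hij
    simp only [Function.update_self] at hg
    exact ⟨rfl, Bool.eq_not.2 fun h => hg h.symm⟩
  · simp [hij] at hg

theorem exists_subset_facet {A : Set (Fin k → Bool)} (hA : A ∈ CubeFaces k) (hne : A.Nonempty)
    (hnu : A ≠ Set.univ) : ∃ i b, A ⊆ facet i b := by
  obtain rfl | ⟨S, f, rfl⟩ : A = ∅ ∨ ∃ S f, A = subcube S f := hA
  · exact absurd hne Set.not_nonempty_empty
  obtain ⟨i, hi⟩ : ∃ i, i ∉ S := by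
    by_contra! h
    exact hnu (Set.eq_univ_of_forall fun g i hi => absurd (h i) hi)
  exact ⟨i, f i, fun g hg => hg i hi⟩

theorem isCoatom_facet (i : Fin k) (b : Bool) :
    IsCoatom (⟨facet i b, facet_mem i b⟩ : CubeFaces k) := by
  refine ⟨fun h => facet_ne_univ i b (congrArg Subtype.val h), fun B hB => ?_⟩
  by_contra hBtop
  have hle : facet i b ⊆ B := hB.le
  obtain ⟨j, c, hBsub⟩ := exists_subset_facet B.2 ⟨_, hle (const_mem_facet i b)⟩
    fun h => hBtop (Subtype.ext h)
  obtain ⟨rfl, rfl⟩ := facet_subset_facet (hle.trans hBsub)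
  exact hB.ne (Subtype.ext (hle.antisymm hBsub))

theorem exists_eq_facet_of_isCoatom [NeZero k] {A : CubeFaces k} (hA : IsCoatom A) :
    ∃ i b, (A : Set (Fin k → Bool)) = facet i b := by
  have hne : (A : Set (Fin k → Bool)).Nonempty := by
    refine Set.nonempty_iff_ne_empty.2 fun h => facet_ne_univ (0 : Fin k) true ?_
    refine congrArg Subtype.val (hA.2 ⟨facet 0 true, facet_mem 0 true⟩ ?_)
    exact Subtype.coe_lt_coe.1 (h ▸ Set.empty_ssubset.2 ⟨_, const_mem_facet 0 true⟩)
  obtain ⟨i, b, hsub⟩ := exists_subset_facet A.2 hne fun h => hA.1 (Subtype.ext h)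
  rcases (hA.le_iff (x := ⟨facet i b, facet_mem i b⟩)).1 hsub with h | h
  · exact absurd (congrArg Subtype.val h) (facet_ne_univ i b)
  · exact ⟨i, b, congrArg Subtype.val h.symm⟩

theorem exists_perm_xor_of_image_facet {ρ : Equiv.Perm (Fin k → Bool)}
    (h : ∀ i b, ∃ j c, ρ '' facet i b = facet j c) :
    ∃ (σ : Equiv.Perm (Fin k)) (c : Fin k → Bool), ∀ g i, ρ g (σ i) = xor (g i) (c i) := by
  choose π₁ π₂ hπ using h
  have hπ_inj {i j b c} (h₁ : π₁ i b = π₁ j c) (h₂ : π₂ i b = π₂ j c) : i = j ∧ b = c :=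
    facet_subset_facet <| (Set.image_subset_image_iff ρ.injective).1 <| by rw [hπ, hπ, h₁, h₂]
  have hπ_true (i : Fin k) : π₁ i true = π₁ i false ∧ π₂ i true = !π₂ i false := by
    have hdisj : Disjoint (facet i false) (facet i true) :=
      Set.disjoint_left.2 fun g (hg : g i = false) (hg' : g i = true) => by simp [hg] at hg'
    obtain ⟨h₁, h₂⟩ := eq_of_disjoint_facet (i := π₁ i false) (j := π₁ i true) <| by
      rwa [← hπ, ← hπ, Set.disjoint_image_iff ρ.injective]
    exact ⟨h₁.symm, h₂⟩
  have hσ : Function.Injective (π₁ · false) := by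
    intro i j hij
    -- `π (j, false)` is one of the two facets `π (i, false)`, `π (i, true)` in its direction
    rcases Bool.eq_or_eq_not (π₂ j false) (π₂ i false) with h | h
    · exact (hπ_inj hij h.symm).1
    · exact (hπ_inj ((hπ_true i).1.trans hij) ((hπ_true i).2.trans h.symm)).1
  refine ⟨Equiv.ofBijective _ (Finite.injective_iff_bijective.1 hσ), (π₂ · false), fun g i => ?_⟩
  have hg : ρ g ∈ facet (π₁ i (g i)) (π₂ i (g i)) := hπ i (g i) ▸ Set.mem_image_of_mem ρ rfl
  change ρ g (π₁ i (g i)) = π₂ i (g i) at hg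
  change ρ g (π₁ i false) = _
  cases hgi : g i
  · rw [hgi] at hg
    simpa using hg
  · rw [hgi, (hπ_true i).1, (hπ_true i).2] at hg
    simpa using hg

theorem exists_hyperoctahedralPerm_eq {ρ : Equiv.Perm (Fin k → Bool)}
    (h : ∀ i b, ∃ j c, ρ '' facet i b = facet j c) : ∃ x, hyperoctahedralPerm k x = ρ := by
  obtain ⟨σ, c, hc⟩ := exists_perm_xor_of_image_facet h
  refine ⟨⟨fun j => bitEquiv.symm (c (σ.symm j)), σ⟩, Equiv.ext fun g => funext fun j => ?_⟩
  rw [hyperoctahedralPerm_apply, Equiv.apply_symm_apply, ← hc, σ.apply_symm_apply]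

end CubeFaces

open CubeFaces

def faceAut (k : ℕ) : Hyperoctahedral k →* (CubeFaces k ≃o CubeFaces k) where
  toFun x := (hyperoctahedralPerm k x).imageOrderIso fun _ => hyperoctahedralPerm_image_mem_iff x
  map_one' := RelIso.ext fun A => Subtype.ext <| by
    simp [Equiv.Perm.coe_imageOrderIso_apply]
  map_mul' x y := RelIso.ext fun A => Subtype.ext <| by
    simp [Equiv.Perm.coe_imageOrderIso_apply, Set.image_image]

theorem faceAut_apply_coe {k : ℕ} (x : Hyperoctahedral k) (A : CubeFaces k) :
    (faceAut k x A : Set (Fin k → Bool)) = hyperoctahedralPerm k x '' A := rfl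

theorem faceAut_injective (k : ℕ) : Function.Injective (faceAut k) := by
  refine (injective_iff_map_eq_one _).2 fun x hx => hyperoctahedralPerm_injective k ?_
  refine Equiv.ext fun g => ?_
  have := congrArg (fun φ : CubeFaces k ≃o CubeFaces k =>
    ((φ ⟨{g}, singleton_mem g⟩ : CubeFaces k) : Set (Fin k → Bool))) hx
  simpa [faceAut_apply_coe] using this

theorem faceAut_surjective (k : ℕ) : Function.Surjective (faceAut k) := by
  intro φ
  obtain ⟨ρ, hρ⟩ := φ.exists_perm_image_eq empty_mem singleton_mem
  have hfacet (i : Fin k) (b : Bool) : ∃ j c, ρ '' facet i b = facet j c := by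
    have : NeZero k := NeZero.of_pos i.pos
    obtain ⟨j, c, h⟩ := exists_eq_facet_of_isCoatom ((φ.isCoatom_iff _).2 (isCoatom_facet i b))
    exact ⟨j, c, (hρ _).symm.trans h⟩
  obtain ⟨x, rfl⟩ := exists_hyperoctahedralPerm_eq hfacet
  exact ⟨x, RelIso.ext fun A => Subtype.ext (hρ A).symm⟩

theorem aut_cube_general (k : ℕ) :
    Nonempty ((CubeFaces k ≃o CubeFaces k) ≃*
      (Fin k → Multiplicative (ZMod 2))
        ⋊[permHom (Fin k) (Multiplicative (ZMod 2))] Equiv.Perm (Fin k)) :=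
  ⟨(MulEquiv.ofBijective (faceAut k) ⟨faceAut_injective k, faceAut_surjective k⟩).symm⟩

/-- For `k ≥ 1`, the group of order-automorphisms of the face poset of the
`k`-cube is the hyperoctahedral group `(ℤ/2ℤ)^k ⋊ Sym(k)`, where `σ` acts by `v ↦ v ∘ σ⁻¹`. -/
theorem aut_cube (k : ℕ) (hk : 1 ≤ k) :
    Nonempty ((CubeFaces k ≃o CubeFaces k) ≃*
      (Fin k → Multiplicative (ZMod 2))
        ⋊[permHom (Fin k) (Multiplicative (ZMod 2))] Equiv.Perm (Fin k)) :=
  aut_cube_general k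
end
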